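/- arXiv:2310.19296 — 6 statements merged into one kernel-verified Lean document; each statement's English description precedes it below -/
import Mathlib

section
/- Let W₁, W₂ : ℝ² → ℝ be Lebesgue integrable with ∫_{ℝ²} W₁ = ∫_{ℝ²} W₂ = 1. Define W : ℝ² × ℝ² → ℝ by W(u,v) = W₁(u)·W₂(v). Then h_i(W) = h_i(W₁) + h_i(W₂) + (2/π)·h_i(W₁)·h_i(W₂). Since h_i ≥ 0, this implies h_i(W) ≥ h_i(W₁) + h_i(W₂): the imaginary part of the complex Wigner entropy is superadditive on product states. -/
open MeasureTheory

/-- The imaginary part of the complex Wigner entropy is superadditive on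
product states:
`h_i(W) = h_i(W₁) + h_i(W₂) + (2/π) h_i(W₁) h_i(W₂) ≥ h_i(W₁) + h_i(W₂)`. -/
theorem wigner_entropy_imaginary_part_superadditive
    (W₁ W₂ : (Fin 2 → ℝ) → ℝ)
    (hW₁ : Integrable W₁) (hW₂ : Integrable W₂)
    (h₁ : ∫ u, W₁ u = 1) (h₂ : ∫ v, W₂ v = 1)
    (W : (Fin 2 → ℝ) × (Fin 2 → ℝ) → ℝ)
    (hW : ∀ u v, W (u, v) = W₁ u * W₂ v) :
    (Real.pi * ∫ q, (|W q| - W q) / 2) =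
        (Real.pi * ∫ u, (|W₁ u| - W₁ u) / 2) +
          (Real.pi * ∫ v, (|W₂ v| - W₂ v) / 2) +
          (2 / Real.pi) * (Real.pi * ∫ u, (|W₁ u| - W₁ u) / 2) *
            (Real.pi * ∫ v, (|W₂ v| - W₂ v) / 2) ∧
      (Real.pi * ∫ u, (|W₁ u| - W₁ u) / 2) +
          (Real.pi * ∫ v, (|W₂ v| - W₂ v) / 2) ≤
        Real.pi * ∫ q, (|W q| - W q) / 2 := by
  have hWeq : W = fun q => W₁ q.1 * W₂ q.2 := by
    funext q; cases q with | mk u v => exact hW u v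
  set A := ∫ u, |W₁ u| with hA
  set B := ∫ v, |W₂ v| with hB
  have hA1 : 1 ≤ A := by
    calc (1:ℝ) = |∫ u, W₁ u| := by rw [h₁]; simp
    _ ≤ A := by simpa [Real.norm_eq_abs] using norm_integral_le_integral_norm W₁
  have hB1 : 1 ≤ B := by
    calc (1:ℝ) = |∫ v, W₂ v| := by rw [h₂]; simp
    _ ≤ B := by simpa [Real.norm_eq_abs] using norm_integral_le_integral_norm W₂
  have habsW : ∫ q : (Fin 2 → ℝ) × (Fin 2 → ℝ), |W q| = A * B := by
    rw [hWeq]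
    simp only [abs_mul]
    exact integral_prod_mul (fun u => |W₁ u|) (fun v => |W₂ v|)
  have hintW : ∫ q : (Fin 2 → ℝ) × (Fin 2 → ℝ), W q = 1 := by
    rw [hWeq]
    have := integral_prod_mul (μ := volume) (ν := volume) W₁ W₂
    rw [h₁, h₂, one_mul] at this
    exact this
  have hI : ∫ q : (Fin 2 → ℝ) × (Fin 2 → ℝ), (|W q| - W q) / 2 = (A * B - 1) / 2 := by
    rw [integral_div, integral_sub (by rw [hWeq]; exact (hW₁.mul_prod hW₂).abs)
      (by rw [hWeq]; exact hW₁.mul_prod hW₂), habsW, hintW]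
  have hI1 : ∫ u, (|W₁ u| - W₁ u) / 2 = (A - 1) / 2 := by
    rw [integral_div, integral_sub hW₁.abs hW₁, h₁]
  have hI2 : ∫ v, (|W₂ v| - W₂ v) / 2 = (B - 1) / 2 := by
    rw [integral_div, integral_sub hW₂.abs hW₂, h₂]
  rw [hI, hI1, hI2]
  have hpi : Real.pi > 0 := Real.pi_pos
  constructor
  · field_simp
    ring
  · nlinarith [mul_nonneg (sub_nonneg.2 hA1) (sub_nonneg.2 hB1)]
end

section
/- Let W : ℝ² → ℝ be differentiable, let S be a 2×2 real orthogonal matrix with det S = 1 (a rotation), let d ∈ ℝ², and define W'(v) = W(Sᵀ(v − d)). Suppose v ↦ ‖∇W(v)‖²/W(v) (taken to be 0 where W(v) = 0) is integrable. Then J_r(W') = J_r(W): the real part of the complex Fisher information is invariant under displacements and orthogonal symplectic transformations of phase space. -/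
/-!
If `φ v = e (v - d)` with `e` a linear isometry, the chain rule gives
`∇(W ∘ φ) v = e⁻¹ (∇W (φ v))`, so the Fisher integrand of `W ∘ φ` is that of `W` composed
with `φ`. Lebesgue measure is invariant under translations and linear isometries, so the two
integrals agree; an orthogonal matrix `S` supplies `e = Sᵀ`.
-/

open MeasureTheory Matrix

section

variable {E : Type*} [NormedAddCommGroup E] [InnerProductSpace ℝ E] [CompleteSpace E]

theorem gradient_comp_linearIsometryEquiv (f : E → ℝ) (e : E ≃ₗᵢ[ℝ] E) (x : E) :
    gradient (f ∘ e) x = e.symm (gradient f (e x)) := by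
  have hfderiv : fderiv ℝ (f ∘ e) x = (fderiv ℝ f (e x)).comp (e : E →L[ℝ] E) :=
    e.toContinuousLinearEquiv.comp_right_fderiv
  apply (InnerProductSpace.toDual ℝ E).injective
  ext y
  simp [gradient, hfderiv, LinearIsometryEquiv.inner_map_eq_flip]

theorem gradient_comp_linearIsometryEquiv_sub (f : E → ℝ) (e : E ≃ₗᵢ[ℝ] E) (d x : E) :
    gradient (fun v => f (e (v - d))) x = e.symm (gradient f (e (x - d))) := by
  have htranslate : fderiv ℝ (fun v => f (e (v - d))) x = fderiv ℝ (f ∘ e) (x - d) :=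
    fderiv_comp_sub (f := f ∘ e) d
  rw [gradient, htranslate]
  exact gradient_comp_linearIsometryEquiv f e (x - d)

/-- With `x / 0 = 0` the integrand vanishes where `W` does, as in the paper's convention. -/
noncomputable def realFisherInformation [MeasureSpace E] (W : E → ℝ) : ℝ :=
  ∫ v, ‖gradient W v‖ ^ 2 / W v

theorem realFisherInformation_comp_linearIsometryEquiv_sub [FiniteDimensional ℝ E]
    [MeasurableSpace E] [BorelSpace E] (W : E → ℝ) (e : E ≃ₗᵢ[ℝ] E) (d : E) :
    realFisherInformation (fun v => W (e (v - d))) = realFisherInformation W := by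
  let F : E → ℝ := fun v => ‖gradient W v‖ ^ 2 / W v
  calc realFisherInformation (fun v => W (e (v - d)))
      = ∫ v, F (e (v - d)) := by
        simp only [realFisherInformation, gradient_comp_linearIsometryEquiv_sub,
          LinearIsometryEquiv.norm_map, F]
    _ = ∫ v, F (e v) := integral_sub_right_eq_self (fun v => F (e v)) d
    _ = ∫ v, F v := e.measurePreserving.integral_comp e.toHomeomorph.measurableEmbedding F

end

theorem Matrix.exists_linearIsometryEquiv_eq_toEuclideanLin {𝕜 n : Type*} [RCLike 𝕜] [Fintype n]
    [DecidableEq n] {A : Matrix n n 𝕜} (hA : A ∈ unitaryGroup n 𝕜) :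
    ∃ e : EuclideanSpace 𝕜 n ≃ₗᵢ[𝕜] EuclideanSpace 𝕜 n, ⇑e = toEuclideanLin A :=
  ⟨Unitary.linearIsometryEquiv ⟨toEuclideanCLM (n := n) (𝕜 := 𝕜) A, Unitary.map_mem _ hA⟩, rfl⟩

theorem fisher_information_real_part_invariance_general
    (W : EuclideanSpace ℝ (Fin 2) → ℝ)
    (S : Matrix (Fin 2) (Fin 2) ℝ)
    (hSO : S * S.transpose = 1)
    (d : EuclideanSpace ℝ (Fin 2))
    (W' : EuclideanSpace ℝ (Fin 2) → ℝ)
    (hW' : ∀ v, W' v = W (Matrix.toEuclideanLin S.transpose (v - d))) :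
    ∫ v, ‖gradient W' v‖ ^ 2 / W' v = ∫ v, ‖gradient W v‖ ^ 2 / W v := by
  have hS : Sᵀ ∈ unitaryGroup (Fin 2) ℝ :=
    transpose_mem_unitaryGroup_iff.mpr (mem_unitaryGroup_iff.mpr hSO)
  obtain ⟨e, he⟩ := exists_linearIsometryEquiv_eq_toEuclideanLin hS
  obtain rfl : W' = fun v => W (e (v - d)) := funext fun v => by rw [hW', he]
  exact realFisherInformation_comp_linearIsometryEquiv_sub W e d

/-- The real part of the complex Fisher information,
`J_r(W) = ∫ ‖∇W‖²/W`, is invariant under displacements and rotations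
(orthogonal symplectic transformations) of phase space. -/
theorem fisher_information_real_part_invariance
    (W : EuclideanSpace ℝ (Fin 2) → ℝ) (hW : Differentiable ℝ W)
    (S : Matrix (Fin 2) (Fin 2) ℝ)
    (hSO : S * S.transpose = 1) (hSdet : S.det = 1)
    (d : EuclideanSpace ℝ (Fin 2))
    (W' : EuclideanSpace ℝ (Fin 2) → ℝ)
    (hW' : ∀ v, W' v = W (Matrix.toEuclideanLin S.transpose (v - d)))
    (hint : Integrable fun v => ‖gradient W v‖ ^ 2 / W v) :
    ∫ v, ‖gradient W' v‖ ^ 2 / W' v = ∫ v, ‖gradient W v‖ ^ 2 / W v :=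
  fisher_information_real_part_invariance_general W S hSO d W' hW'
end

section
/- Let W : ℝ² → ℝ be twice continuously differentiable, suppose the set D = {v : W(v) < 0} is bounded, and suppose ∇W(v) ≠ 0 at every point v with W(v) = 0. Then ∫_D ΔW(v) dv ≥ 0; equivalently, the imaginary part of the complex Fisher information J_i(W) = −π ∫_D ΔW(v) dv is nonpositive. -/
open MeasureTheory

/-- The Laplacian of a function on the phase plane. -/
noncomputable def lap (W : EuclideanSpace ℝ (Fin 2) → ℝ)
    (v : EuclideanSpace ℝ (Fin 2)) : ℝ :=
  ∑ i : Fin 2,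
    fderiv ℝ (fun u => fderiv ℝ W u (EuclideanSpace.single i 1)) v
      (EuclideanSpace.single i 1)

/-!
Each second directional derivative `∂ᵥ²W` already has nonnegative integral over `{W < 0}`.
Let `ψ` be a smooth antitone cutoff vanishing on `[0, ∞)`. Integrating by parts along `v`,
`∫ ψ(W) ∂ᵥ²W = -∫ ψ'(W) (∂ᵥW)² ≥ 0`, with no boundary term because `ψ ∘ W` has compact support.
For `ψₙ(t) = smoothTransition (-n t)` the functions `ψₙ ∘ W` increase to the indicator of
`{W < 0}`, so dominated convergence passes the inequality to the limit.
-/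

open Set Filter Topology

theorem Real.tendsto_smoothTransition_natCast_mul (t : ℝ) :
    Tendsto (fun n : ℕ => Real.smoothTransition (n * t)) atTop
      (𝓝 ((Ioi 0).indicator 1 t)) := by
  rcases le_or_gt t 0 with ht | ht
  · rw [indicator_of_notMem (notMem_Ioi.2 ht)]
    refine tendsto_const_nhds.congr fun n => ?_
    exact (Real.smoothTransition.zero_of_nonpos
      (mul_nonpos_of_nonneg_of_nonpos n.cast_nonneg ht)).symm
  · rw [indicator_of_mem (mem_Ioi.2 ht), Pi.one_apply]
    obtain ⟨N, hN⟩ := exists_nat_ge t⁻¹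
    refine tendsto_const_nhds.congr' ?_
    filter_upwards [eventually_ge_atTop N] with n hn
    refine (Real.smoothTransition.one_of_one_le ?_).symm
    calc (1 : ℝ) = t⁻¹ * t := (inv_mul_cancel₀ ht.ne').symm
      _ ≤ n * t := by gcongr; exact hN.trans (Nat.cast_le.2 hn)

theorem smoothTransition_natCast_mul_neg_eq_zero_of_notMem_closure {α : Type*}
    [TopologicalSpace α] {f : α → ℝ} {x : α} (hx : x ∉ closure {x | f x < 0}) (n : ℕ) :
    Real.smoothTransition (n * -f x) = 0 :=
  Real.smoothTransition.zero_of_nonpos (mul_nonpos_of_nonneg_of_nonpos n.cast_nonneg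
    (neg_nonpos.2 (not_lt.1 fun h => hx (subset_closure h))))

theorem tendsto_integral_smoothTransition_mul_neg {α : Type*} [MetricSpace α] [ProperSpace α]
    [MeasurableSpace α] [OpensMeasurableSpace α] {μ : Measure α} [IsFiniteMeasureOnCompacts μ]
    {f g : α → ℝ} (hf : Continuous f) (hg : Continuous g)
    (hbdd : Bornology.IsBounded {x | f x < 0}) :
    Tendsto (fun n : ℕ => ∫ x, Real.smoothTransition (n * -f x) * g x ∂μ) atTop
      (𝓝 (∫ x in {x | f x < 0}, g x ∂μ)) := by
  set K := closure {x | f x < 0}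
  have hK : IsCompact K := hbdd.isCompact_closure
  have hlim : ∀ x, Tendsto (fun n : ℕ => Real.smoothTransition (n * -f x) * g x) atTop
      (𝓝 ({x | f x < 0}.indicator g x)) := fun x => by
    convert (Real.tendsto_smoothTransition_natCast_mul (-f x)).mul_const (g x) using 2
    by_cases hx : f x < 0 <;> simp [hx]
  have hbound : ∀ (n : ℕ) x,
      ‖Real.smoothTransition (n * -f x) * g x‖ ≤ K.indicator (|g ·|) x := by
    intro n x
    by_cases hx : x ∈ K
    · rw [indicator_of_mem hx, norm_mul, Real.norm_eq_abs,
        abs_of_nonneg (Real.smoothTransition.nonneg _)]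
      exact mul_le_of_le_one_left (abs_nonneg _) (Real.smoothTransition.le_one _)
    · rw [indicator_of_notMem hx,
        smoothTransition_natCast_mul_neg_eq_zero_of_notMem_closure hx, zero_mul, norm_zero]
  rw [← integral_indicator (isOpen_lt hf continuous_const).measurableSet]
  exact tendsto_integral_of_dominated_convergence _
    (fun n => ((Real.smoothTransition.continuous.comp
      (continuous_const.mul hf.neg)).mul hg).aestronglyMeasurable)
    ((hg.abs.continuousOn.integrableOn_compact hK).integrable_indicator measurableSet_closure)
    (fun n => .of_forall (hbound n)) (.of_forall hlim)

variable {E : Type*} [NormedAddCommGroup E] [NormedSpace ℝ E] {f : E → ℝ}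

theorem ContDiff.contDiff_fderiv_apply_const (hf : ContDiff ℝ 2 f) (v : E) :
    ContDiff ℝ 1 fun u => fderiv ℝ f u v :=
  (hf.fderiv_right (by norm_num)).clm_apply contDiff_const

theorem ContDiff.continuous_fderiv_fderiv_apply (hf : ContDiff ℝ 2 f) (v : E) :
    Continuous fun x => fderiv ℝ (fun u => fderiv ℝ f u v) x v :=
  ((hf.contDiff_fderiv_apply_const v).continuous_fderiv one_ne_zero).clm_apply continuous_const

variable [FiniteDimensional ℝ E] [MeasurableSpace E] [BorelSpace E] {μ : Measure E}

theorem integral_mul_fderiv_fderiv_apply_nonneg [μ.IsAddHaarMeasure] {ψ : ℝ → ℝ}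
    (hf : ContDiff ℝ 2 f) (hψ : ContDiff ℝ 1 ψ) (hψ_anti : Antitone ψ)
    (hsupp : HasCompactSupport (ψ ∘ f)) (v : E) :
    0 ≤ ∫ x, ψ (f x) * fderiv ℝ (fun u => fderiv ℝ f u v) x v ∂μ := by
  set g := fun u => fderiv ℝ f u v
  have hg : ContDiff ℝ 1 g := hf.contDiff_fderiv_apply_const v
  have hψf : ContDiff ℝ 1 (ψ ∘ f) := hψ.comp (hf.of_le (by norm_num))
  have hchain : ∀ x, fderiv ℝ (ψ ∘ f) x v = deriv ψ (f x) * g x := fun x => by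
    rw [((hψ.differentiable one_ne_zero _).hasDerivAt.comp_hasFDerivAt x
      (hf.differentiable (by norm_num) x).hasFDerivAt).fderiv]
    rfl
  change 0 ≤ ∫ x, (ψ ∘ f) x * fderiv ℝ g x v ∂μ
  rw [integral_mul_fderiv_eq_neg_fderiv_mul_of_integrable
      ((((hψf.continuous_fderiv one_ne_zero).clm_apply continuous_const).mul hg.continuous)
        |>.integrable_of_hasCompactSupport (hsupp.fderiv_apply (𝕜 := ℝ) v).mul_right)
      ((hψf.continuous.mul (hf.continuous_fderiv_fderiv_apply v))
        |>.integrable_of_hasCompactSupport hsupp.mul_right)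
      ((hψf.continuous.mul hg.continuous).integrable_of_hasCompactSupport hsupp.mul_right)
      (fun x _ => hψf.differentiable one_ne_zero x) (fun x _ => hg.differentiable one_ne_zero x),
    neg_nonneg]
  refine integral_nonpos fun x => ?_
  simp only [hchain, mul_assoc]
  exact mul_nonpos_of_nonpos_of_nonneg hψ_anti.deriv_nonpos (mul_self_nonneg _)

theorem setIntegral_neg_domain_fderiv_fderiv_apply_nonneg [μ.IsAddHaarMeasure]
    (hf : ContDiff ℝ 2 f) (hbdd : Bornology.IsBounded {x | f x < 0}) (v : E) :
    0 ≤ ∫ x in {x | f x < 0}, fderiv ℝ (fun u => fderiv ℝ f u v) x v ∂μ := by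
  refine ge_of_tendsto' (tendsto_integral_smoothTransition_mul_neg hf.continuous
    (hf.continuous_fderiv_fderiv_apply v) hbdd) fun n => ?_
  have hψ_anti : Antitone fun t : ℝ => Real.smoothTransition (n * -t) :=
    Real.smoothTransition.monotone.comp_antitone fun s t hst => by gcongr
  have hsupp : HasCompactSupport fun x => Real.smoothTransition (n * -f x) :=
    .intro hbdd.isCompact_closure fun _ hx =>
      smoothTransition_natCast_mul_neg_eq_zero_of_notMem_closure hx n
  exact integral_mul_fderiv_fderiv_apply_nonneg hf
    (Real.smoothTransition.contDiff.comp (contDiff_const.mul contDiff_neg)) hψ_anti hsupp v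

theorem fisher_information_imaginary_part_nonpos_general
    (W : EuclideanSpace ℝ (Fin 2) → ℝ) (hW : ContDiff ℝ 2 W)
    (hbdd : Bornology.IsBounded {v | W v < 0}) :
    0 ≤ ∫ v in {v | W v < 0}, lap W v := by
  have hint : ∀ i ∈ Finset.univ, IntegrableOn
      (fun v => fderiv ℝ (fun u => fderiv ℝ W u (EuclideanSpace.single i 1)) v
        (EuclideanSpace.single i 1)) {v | W v < 0} := fun i _ =>
    ((hW.continuous_fderiv_fderiv_apply _).continuousOn.integrableOn_compact
      hbdd.isCompact_closure).mono_set subset_closure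
  unfold lap
  rw [integral_finsetSum _ hint]
  exact Finset.sum_nonneg fun i _ => setIntegral_neg_domain_fderiv_fderiv_apply_nonneg hW hbdd _

/-- The integral of the Laplacian over the (bounded) negative domain of `W` is
nonnegative; equivalently, the imaginary part of the complex Fisher information
`J_i(W) = -π ∫_{W<0} ΔW` is nonpositive. -/
theorem fisher_information_imaginary_part_nonpos
    (W : EuclideanSpace ℝ (Fin 2) → ℝ) (hW : ContDiff ℝ 2 W)
    (hbdd : Bornology.IsBounded {v | W v < 0})
    (hgrad : ∀ v, W v = 0 → gradient W v ≠ 0) :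
    0 ≤ ∫ v in {v | W v < 0}, lap W v :=
  fisher_information_imaginary_part_nonpos_general W hW hbdd
end

section
/- Let W : ℝ × ℝ² → ℝ be continuously differentiable in the first (time) variable and twice continuously differentiable in the second (phase-space) variable, satisfying the diffusion equation ∂W/∂t(t,v) = ½ Δ_v W(t,v). Fix t₀, and assume: (i) W(t₀,·) is integrable; (ii) there is an integrable function g : ℝ² → ℝ with |∂W/∂t(t,v)| ≤ g(v) for all t in a neighborhood of t₀ and all v; (iii) the set {v : W(t₀,v) = 0} has Lebesgue measure zero; (iv) Δ_v W(t₀,·) is integrable on {v : W(t₀,v) < 0}. Then the function t ↦ Vol₋(W(t,·)) is differentiable at t₀ with derivative −½ ∫_{{v : W(t₀,v) < 0}} Δ_v W(t₀,v) dv; equivalently, d/dt h_i(W(t,·)) at t₀ equals ½ J_i(W(t₀,·)). This is the imaginary part of the complex de Bruijn identity. -/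
open MeasureTheory Set Filter Topology

theorem continuous_lap {W : EuclideanSpace ℝ (Fin 2) → ℝ} (hW : ContDiff ℝ 2 W) :
    Continuous (lap W) := by
  refine continuous_finsetSum _ fun i _ => ?_
  have hpartial : ContDiff ℝ 1 fun u => fderiv ℝ W u (EuclideanSpace.single i 1) :=
    (hW.fderiv_right (by norm_num)).clm_apply contDiff_const
  exact (hpartial.continuous_fderiv one_ne_zero).clm_apply continuous_const

theorem indicator_setOf_lt_zero_self {α : Type*} (f : α → ℝ) :
    {v | f v < 0}.indicator f = fun v => min (f v) 0 := by
  funext v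
  by_cases h : f v < 0
  · simp [h, h.le]
  · simp [h, not_lt.mp h]

theorem HasDerivAt.min_const {f : ℝ → ℝ} {f' t c : ℝ} (hf : HasDerivAt f f' t)
    (hc : f t ≠ c) :
    HasDerivAt (fun s => min (f s) c) (if f t < c then f' else 0) t := by
  rcases hc.lt_or_gt with hlt | hgt
  · have hmin : (fun s => min (f s) c) =ᶠ[𝓝 t] f :=
      (hf.continuousAt.eventually_lt continuousAt_const hlt).mono fun s hs => min_eq_left hs.le
    simpa [hlt] using hf.congr_of_eventuallyEq hmin
  · have hmin : (fun s => min (f s) c) =ᶠ[𝓝 t] fun _ => c :=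
      (continuousAt_const.eventually_lt hf.continuousAt hgt).mono fun s hs => min_eq_right hs.le
    simpa [not_lt.mpr hgt.le] using (hasDerivAt_const t c).congr_of_eventuallyEq hmin

theorem LipschitzOnWith.min_const {α : Type*} [PseudoEMetricSpace α] {f : α → ℝ} {K : NNReal}
    {s : Set α} (hf : LipschitzOnWith K f s) (c : ℝ) :
    LipschitzOnWith K (fun t => min (f t) c) s := by
  simpa [Function.comp_def] using
    (LipschitzWith.min_const LipschitzWith.id c).comp_lipschitzOnWith hf

section NegativePart

variable {α : Type*} [MeasurableSpace α] {μ : Measure α} {F F' : ℝ → α → ℝ}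
  {g : α → ℝ} {t₀ : ℝ}

/-- Differentiating under the integral sign is allowed although `min (F t v) 0` has a kink:
it is Lipschitz in `t` uniformly dominated by `g`, and differentiable at `t₀` away from the
null set `{F t₀ = 0}`. -/
theorem hasDerivAt_setIntegral_setOf_lt_zero (hF_meas : ∀ t, Measurable (F t))
    (hF_int : IntegrableOn (F t₀) {v | F t₀ v < 0} μ)
    (hF'_meas : AEStronglyMeasurable (F' t₀) μ)
    (hF' : ∀ᶠ t in 𝓝 t₀, ∀ v,
      HasDerivAt (fun s => F s v) (F' t v) t ∧ |F' t v| ≤ g v)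
    (hg : Integrable g μ) (hzero : μ {v | F t₀ v = 0} = 0) :
    HasDerivAt (fun t => ∫ v in {v | F t v < 0}, F t v ∂μ)
      (∫ v in {v | F t₀ v < 0}, F' t₀ v ∂μ) t₀ := by
  have hmeas : ∀ t, MeasurableSet {v | F t v < 0} := fun t =>
    measurableSet_lt (hF_meas t) measurable_const
  obtain ⟨ε, hε, hball⟩ := Metric.eventually_nhds_iff_ball.mp hF'
  have hlip : ∀ v, LipschitzOnWith (Real.nnabs (g v)) (fun t => min (F t v) 0)
      (Metric.ball t₀ ε) := fun v =>
    ((convex_ball t₀ ε).lipschitzOnWith_of_nnnorm_hasDerivWithin_le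
      (fun t ht => (hball t ht v).1.hasDerivWithinAt) fun t ht => by
        rw [← NNReal.coe_le_coe, coe_nnnorm, Real.norm_eq_abs, Real.coe_nnabs]
        exact (hball t ht v).2.trans (le_abs_self _)).min_const 0
  have hderiv : ∀ᵐ v ∂μ, HasDerivAt (fun t => min (F t v) 0)
      ({v | F t₀ v < 0}.indicator (F' t₀) v) t₀ := by
    filter_upwards [measure_eq_zero_iff_ae_notMem.mp hzero] with v hv
    simpa [indicator_apply] using
      (hball t₀ (Metric.mem_ball_self hε) v).1.min_const (c := 0) hv
  have hmin_int : Integrable (fun v => min (F t₀ v) 0) μ := by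
    rw [← indicator_setOf_lt_zero_self, integrable_indicator_iff (hmeas t₀)]
    exact hF_int
  have key := (hasDerivAt_integral_of_dominated_loc_of_lip (Metric.ball_mem_nhds t₀ hε)
    (Eventually.of_forall fun t => ((hF_meas t).min measurable_const).aestronglyMeasurable)
    hmin_int (hF'_meas.indicator (hmeas t₀)) (Eventually.of_forall hlip) hg hderiv).2
  simp_rw [← integral_indicator (hmeas _), indicator_setOf_lt_zero_self]
  exact key

end NegativePart

theorem complex_deBruijn_imaginary_part_general
    (W : ℝ → EuclideanSpace ℝ (Fin 2) → ℝ)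
    (hWt : ∀ v, ContDiff ℝ 1 fun t => W t v)
    (hWv : ∀ t, ContDiff ℝ 2 (W t))
    (hdiffusion : ∀ t v, deriv (fun s => W s v) t = (1 / 2) * lap (W t) v)
    (t₀ : ℝ)
    (hint : Integrable (W t₀))
    (hdom : ∃ g : EuclideanSpace ℝ (Fin 2) → ℝ, Integrable g ∧
      ∀ᶠ t in nhds t₀, ∀ v, |deriv (fun s => W s v) t| ≤ g v)
    (hzero : volume {v | W t₀ v = 0} = 0) :
    HasDerivAt (fun t => -∫ v in {v | W t v < 0}, W t v)
      (-(1 / 2) * ∫ v in {v | W t₀ v < 0}, lap (W t₀) v) t₀ := by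
  obtain ⟨g, hg, hbound⟩ := hdom
  have hW'_meas : AEStronglyMeasurable (fun v => deriv (fun s => W s v) t₀) volume := by
    simp_rw [hdiffusion]
    exact (continuous_const.mul (continuous_lap (hWv t₀))).aestronglyMeasurable
  have hW' : ∀ᶠ t in 𝓝 t₀, ∀ v, HasDerivAt (fun s => W s v) (deriv (fun s => W s v) t) t ∧
      |deriv (fun s => W s v) t| ≤ g v :=
    hbound.mono fun t ht v =>
      ⟨((hWt v).differentiable one_ne_zero t).hasDerivAt, ht v⟩
  have key := hasDerivAt_setIntegral_setOf_lt_zero (fun t => (hWv t).continuous.measurable)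
    hint.integrableOn hW'_meas hW' hg hzero
  simp_rw [hdiffusion, integral_const_mul] at key
  rw [neg_mul]
  exact key.neg

/-- Imaginary part of the complex de Bruijn identity: under the diffusion
equation `∂W/∂t = ½ ΔW`, the negative volume `Vol₋(W(t,·)) = -∫_{W<0} W` is
differentiable in time with derivative `-½ ∫_{W<0} ΔW`; equivalently
`d/dt h_i = ½ J_i`. -/
theorem complex_deBruijn_imaginary_part
    (W : ℝ → EuclideanSpace ℝ (Fin 2) → ℝ)
    (hWt : ∀ v, ContDiff ℝ 1 fun t => W t v)
    (hWv : ∀ t, ContDiff ℝ 2 (W t))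
    (hdiffusion : ∀ t v, deriv (fun s => W s v) t = (1 / 2) * lap (W t) v)
    (t₀ : ℝ)
    (hint : Integrable (W t₀))
    (hdom : ∃ g : EuclideanSpace ℝ (Fin 2) → ℝ, Integrable g ∧
      ∀ᶠ t in nhds t₀, ∀ v, |deriv (fun s => W s v) t| ≤ g v)
    (hzero : volume {v | W t₀ v = 0} = 0)
    (hlap : IntegrableOn (lap (W t₀)) {v | W t₀ v < 0}) :
    HasDerivAt (fun t => -∫ v in {v | W t v < 0}, W t v)
      (-(1 / 2) * ∫ v in {v | W t₀ v < 0}, lap (W t₀) v) t₀ :=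
  complex_deBruijn_imaginary_part_general W hWt hWv hdiffusion t₀ hint hdom hzero
end

section
/- Let f, g : ℝ → ℝ be Lebesgue integrable with 0 ≤ g(x) ≤ f(x) for all x, and suppose the functions f ln f, g ln g, and (f−g) ln(f−g) are integrable (each integrand taken to be 0 where its argument vanishes). Then −∫_ℝ (f(x)−g(x)) ln(f(x)−g(x)) dx ≥ −∫_ℝ f(x) ln f(x) dx + ∫_ℝ g(x) ln g(x) dx. Applied to the marginals f = ρ⁺_x and g = ρ⁻_x of the positive and negative parts of a Wigner function, this gives h(ρ_x) ≥ h(ρ⁺_x) − h(ρ⁻_x). -/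
open MeasureTheory

lemma pointwise_aux (a b : ℝ) (ha : 0 ≤ a) (hb : 0 ≤ b) :
    b * Real.log b ≤ (a + b) * Real.log (a + b) - a * Real.log a := by
  have h1 : a * Real.log a ≤ a * Real.log (a + b) := by
    rcases eq_or_lt_of_le ha with h | h
    · simp [← h]
    · exact mul_le_mul_of_nonneg_left
        (Real.log_le_log h (by linarith)) ha
  have h2 : b * Real.log b ≤ b * Real.log (a + b) := by
    rcases eq_or_lt_of_le hb with h | h
    · simp [← h]
    · exact mul_le_mul_of_nonneg_left
        (Real.log_le_log h (by linarith)) hb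
  have : (a + b) * Real.log (a + b) = a * Real.log (a + b) + b * Real.log (a + b) := by ring
  linarith

/-- If `0 ≤ g ≤ f`, then `h(f - g) ≥ h(f) - h(g)` for the (possibly
non-normalized) differential Shannon entropy `h(f) = -∫ f ln f`.  Applied to
the marginals of the positive and negative parts of a Wigner function, this
gives `h(ρ_x) ≥ h(ρ⁺_x) - h(ρ⁻_x)`. -/
theorem entropy_difference_lower_bound
    (f g : ℝ → ℝ) (hf : Integrable f) (hg : Integrable g)
    (hg0 : ∀ x, 0 ≤ g x) (hgf : ∀ x, g x ≤ f x)
    (hf' : Integrable fun x => f x * Real.log (f x))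
    (hg' : Integrable fun x => g x * Real.log (g x))
    (hfg' : Integrable fun x => (f x - g x) * Real.log (f x - g x)) :
    (-∫ x, f x * Real.log (f x)) + ∫ x, g x * Real.log (g x) ≤
      -∫ x, (f x - g x) * Real.log (f x - g x) := by
  have key : ∫ x, (f x - g x) * Real.log (f x - g x) ≤
      ∫ x, (f x * Real.log (f x) - g x * Real.log (g x)) := by
    refine integral_mono hfg' (hf'.sub hg') fun x => ?_
    have := pointwise_aux (g x) (f x - g x) (hg0 x) (by linarith [hgf x])
    simpa using this
  rw [integral_sub hf' hg'] at key
  linarith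
end

section
/- Let W : ℝ² → ℝ be Lebesgue integrable with ∫_{ℝ²} W = 1. Write W⁺ = max(W,0) and W⁻ = max(−W,0), and set Vol₊(W) = ∫ W⁺. Define the marginals ρ_x(x) = ∫ W(x,p) dp, ρ_p(p) = ∫ W(x,p) dx, ρ⁻_x(x) = ∫ W⁻(x,p) dp, ρ⁻_p(p) = ∫ W⁻(x,p) dx, and assume ρ_x ≥ 0 and ρ_p ≥ 0 pointwise. Assume all entropy integrands below (f ln f for the relevant f, taken 0 where the argument vanishes) are integrable. Then h(ρ_x) + h(ρ_p) ≥ h₊(W) − Vol₊(W) ln Vol₊(W) − h(ρ⁻_x) − h(ρ⁻_p). -/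
/-!
Write `f = W⁺` and `A`, `B` for its marginals, so that `A = ρ_x + ρ⁻_x` and `B = ρ_p + ρ⁻_p`,
since `W⁺ = W + W⁻`. Gibbs' inequality `f ln f ≥ f ln (A B / V) + f - A B / V` with
`V = Vol₊(W) = ∫ A = ∫ B`, integrated over the plane, gives the subadditivity
`h(A) + h(B) ≥ h(f) - V ln V`, and superadditivity of `t ↦ t ln t` on `[0, ∞)` gives
`h(ρ_x) + h(ρ⁻_x) ≥ h(A)` and `h(ρ_p) + h(ρ⁻_p) ≥ h(B)`.
-/

open MeasureTheory Real

lemma mul_log_add_mul_log_le {a b : ℝ} (ha : 0 ≤ a) (hb : 0 ≤ b) :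
    a * log a + b * log b ≤ (a + b) * log (a + b) := by
  have key : ∀ {x y : ℝ}, 0 ≤ x → 0 ≤ y → x * log x ≤ x * log (x + y) := fun hx hy => by
    rcases hx.eq_or_lt with rfl | hx
    · simp
    · exact mul_le_mul_of_nonneg_left (log_le_log hx (le_add_of_nonneg_right hy)) hx.le
  have := key hb ha
  rw [add_comm b a] at this
  linarith [key ha hb]

lemma add_mul_log_add_le {a b : ℝ} (ha : 0 ≤ a) (hb : 0 ≤ b) :
    (a + b) * log (a + b) ≤ a * log a + b * log b + (a + b) * log 2 := by
  rcases (add_nonneg ha hb).eq_or_lt with h | h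
  · simp [(add_eq_zero_iff_of_nonneg ha hb).1 h.symm]
  have hmid := convexOn_mul_log.2 (Set.mem_Ici.2 ha) (Set.mem_Ici.2 hb)
    (by norm_num : (0 : ℝ) ≤ 1 / 2) (by norm_num : (0 : ℝ) ≤ 1 / 2) (by norm_num)
  simp only [smul_eq_mul] at hmid
  rw [show 1 / 2 * a + 1 / 2 * b = (a + b) / 2 by ring, log_div h.ne' two_ne_zero] at hmid
  linarith

/-- Gibbs' inequality `a log a ≥ a log q + a - q` at `q = b c / V`, in a form that also holds
for `a = 0` (where `log 0 = 0` and `x / 0 = 0`). -/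
lemma mul_log_add_mul_log_le_mul_log_add_div {a b c V : ℝ} (ha : 0 ≤ a) (hbcV : 0 ≤ b * c / V)
    (h : 0 < a → 0 < b ∧ 0 < c ∧ 0 < V) :
    a * log b + a * log c ≤ a * log a + a * (log V - 1) + b * c / V := by
  rcases ha.eq_or_lt with rfl | ha
  · simpa using hbcV
  obtain ⟨hb, hc, hV⟩ := h ha
  have h1 := mul_le_mul_of_nonneg_left
    (log_le_sub_one_of_pos (by positivity : 0 < b * c / V / a)) ha.le
  rw [log_div (by positivity) ha.ne', log_div (by positivity) hV.ne', log_mul hb.ne' hc.ne',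
    mul_sub_one, mul_div_cancel₀ _ ha.ne'] at h1
  linarith

lemma max_zero_mul_log_eq_indicator {α : Type*} (W : α → ℝ) :
    (fun v => max (W v) 0 * log (max (W v) 0)) =
      {v | 0 ≤ W v}.indicator fun v => W v * log (W v) := by
  ext v
  by_cases h : 0 ≤ W v
  · simp [h]
  · simp [h, (not_le.1 h).le]

section Integrals

variable {α β : Type*} [MeasurableSpace α] [MeasurableSpace β] {μ : Measure α} {ν : Measure β}

lemma integrable_max_zero_mul_log {W : α → ℝ} (hW : AEStronglyMeasurable W μ)
    (h : IntegrableOn (fun v => W v * log (W v)) {v | 0 ≤ W v} μ) :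
    Integrable (fun v => max (W v) 0 * log (max (W v) 0)) μ := by
  rw [max_zero_mul_log_eq_indicator]
  exact h.integrable_indicator₀ (nullMeasurableSet_le aemeasurable_const hW.aemeasurable)

lemma setIntegral_nonneg_mul_log_eq {W : α → ℝ} (hW : AEStronglyMeasurable W μ) :
    ∫ v in {v | 0 ≤ W v}, W v * log (W v) ∂μ = ∫ v, max (W v) 0 * log (max (W v) 0) ∂μ := by
  rw [← integral_indicator₀ (nullMeasurableSet_le aemeasurable_const hW.aemeasurable),
    ← max_zero_mul_log_eq_indicator]

lemma integrable_add_mul_log_add {g h : α → ℝ} (hg0 : 0 ≤ g) (hh0 : 0 ≤ h)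
    (hg : Integrable g μ) (hh : Integrable h μ) (hgl : Integrable (fun x => g x * log (g x)) μ)
    (hhl : Integrable (fun x => h x * log (h x)) μ) :
    Integrable (fun x => (g x + h x) * log (g x + h x)) μ :=
  integrable_of_le_of_le (continuous_mul_log.comp_aestronglyMeasurable (hg.add hh).1)
    (ae_of_all _ fun x => mul_log_add_mul_log_le (hg0 x) (hh0 x))
    (ae_of_all _ fun x => add_mul_log_add_le (hg0 x) (hh0 x))
    (hgl.add hhl) ((hgl.add hhl).add ((hg.add hh).mul_const _))

lemma integral_mul_log_add_integral_mul_log_le {g h : α → ℝ} (hg0 : 0 ≤ g) (hh0 : 0 ≤ h)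
    (hg : Integrable g μ) (hh : Integrable h μ) (hgl : Integrable (fun x => g x * log (g x)) μ)
    (hhl : Integrable (fun x => h x * log (h x)) μ) :
    ∫ x, g x * log (g x) ∂μ + ∫ x, h x * log (h x) ∂μ ≤
      ∫ x, (g x + h x) * log (g x + h x) ∂μ := by
  rw [← integral_add hgl hhl]
  exact integral_mono (hgl.add hhl) (integrable_add_mul_log_add hg0 hh0 hg hh hgl hhl)
    fun x => mul_log_add_mul_log_le (hg0 x) (hh0 x)

variable [SFinite μ] [SFinite ν]

lemma ae_integral_max_zero_eq_add {W : α × β → ℝ} (hW : Integrable W (μ.prod ν)) :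
    ∀ᵐ x ∂μ, ∫ p, max (W (x, p)) 0 ∂ν = ∫ p, W (x, p) ∂ν + ∫ p, max (-W (x, p)) 0 ∂ν := by
  filter_upwards [hW.prod_right_ae, hW.neg.pos_part.prod_right_ae] with x hx hxneg
  change Integrable (fun p => max (-W (x, p)) 0) ν at hxneg
  rw [← integral_add hx hxneg]
  congr 1 with p
  rcases le_total (W (x, p)) 0 with h | h <;> simp [h]

lemma ae_pos_integral_prod_right_of_stronglyMeasurable {f : α × β → ℝ}
    (hfm : StronglyMeasurable f) (hf : Integrable f (μ.prod ν)) (hpos : 0 ≤ᵐ[μ.prod ν] f) :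
    ∀ᵐ v ∂μ.prod ν, 0 < f v → 0 < ∫ p, f (v.1, p) ∂ν := by
  have hA : StronglyMeasurable fun x => ∫ p, f (x, p) ∂ν := hfm.integral_prod_right'
  have hs : MeasurableSet {v : α × β | 0 < f v → 0 < ∫ p, f (v.1, p) ∂ν} :=
    (measurableSet_lt measurable_const hfm.measurable).himp
      (measurableSet_lt measurable_const (hA.measurable.comp measurable_fst))
  rw [Measure.ae_prod_iff_ae_ae hs]
  filter_upwards [hf.prod_right_ae, Measure.ae_ae_of_ae_prod hpos] with x hx hxpos
  rcases (integral_nonneg_of_ae hxpos).eq_or_lt with h | h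
  · filter_upwards [(integral_eq_zero_iff_of_nonneg_ae hxpos hx).1 h.symm] with p hp hfp
    exact absurd hp hfp.ne'
  · exact ae_of_all _ fun _ _ => h

lemma ae_pos_integral_prod_right {f : α × β → ℝ} (hf : Integrable f (μ.prod ν))
    (hpos : 0 ≤ᵐ[μ.prod ν] f) :
    ∀ᵐ v ∂μ.prod ν, 0 < f v → 0 < ∫ p, f (v.1, p) ∂ν := by
  have hfg := hf.1.ae_eq_mk
  have hA : ∀ᵐ x ∂μ, ∫ p, f (x, p) ∂ν = ∫ p, hf.1.mk f (x, p) ∂ν := by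
    filter_upwards [Measure.ae_ae_of_ae_prod hfg] with x hx using integral_congr_ae hx
  filter_upwards [ae_pos_integral_prod_right_of_stronglyMeasurable hf.1.stronglyMeasurable_mk
    (hf.congr hfg) (hpos.trans_eq hfg), hfg, Measure.quasiMeasurePreserving_fst.ae hA]
    with v hv hfv hAv
  rw [hfv, hAv]
  exact hv

lemma ae_pos_integrals_of_pos {f : α × β → ℝ} (hf : Integrable f (μ.prod ν)) (hpos : 0 ≤ f) :
    ∀ᵐ v ∂μ.prod ν, 0 < f v →
      0 < ∫ p, f (v.1, p) ∂ν ∧ 0 < ∫ x, f (x, v.2) ∂μ ∧ 0 < ∫ w, f w ∂μ.prod ν := by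
  have hV : ∀ᵐ v ∂μ.prod ν, 0 < f v → 0 < ∫ w, f w ∂μ.prod ν := by
    rcases (integral_nonneg hpos).eq_or_lt with h | h
    · filter_upwards [(integral_eq_zero_iff_of_nonneg hpos hf).1 h.symm] with v hv hfv
      exact absurd hv hfv.ne'
    · exact ae_of_all _ fun _ _ => h
  filter_upwards [ae_pos_integral_prod_right hf (ae_of_all _ hpos),
    Measure.measurePreserving_swap.quasiMeasurePreserving.ae
      (ae_pos_integral_prod_right hf.swap (ae_of_all _ fun _ => hpos _)), hV]
    with v hA hB hV hfv
  exact ⟨hA hfv, hB hfv, hV hfv⟩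

lemma integrable_mul_comp_fst {f : α × β → ℝ} (hf : Integrable f (μ.prod ν)) (hpos : 0 ≤ f)
    {g : α → ℝ} (hg : AEStronglyMeasurable g μ)
    (hfg : Integrable (fun x => (∫ p, f (x, p) ∂ν) * g x) μ) :
    Integrable (fun v => f v * g v.1) (μ.prod ν) := by
  have hm : AEStronglyMeasurable (fun v => f v * g v.1) (μ.prod ν) :=
    hf.1.mul (hg.comp_quasiMeasurePreserving Measure.quasiMeasurePreserving_fst)
  refine (integrable_prod_iff hm).2 ⟨?_, hfg.norm.congr (ae_of_all _ fun x => ?_)⟩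
  · filter_upwards [hf.prod_right_ae] with x hx using hx.mul_const _
  · simp only [norm_mul, Real.norm_eq_abs, abs_of_nonneg (hpos _), integral_mul_const,
      abs_of_nonneg (integral_nonneg fun p => hpos (x, p))]

lemma integral_mul_comp_fst (f : α × β → ℝ) (g : α → ℝ)
    (hfg : Integrable (fun v => f v * g v.1) (μ.prod ν)) :
    ∫ v, f v * g v.1 ∂μ.prod ν = ∫ x, (∫ p, f (x, p) ∂ν) * g x ∂μ := by
  simp only [integral_prod _ hfg, integral_mul_const]

lemma integrable_mul_comp_snd {f : α × β → ℝ} (hf : Integrable f (μ.prod ν)) (hpos : 0 ≤ f)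
    {g : β → ℝ} (hg : AEStronglyMeasurable g ν)
    (hfg : Integrable (fun p => (∫ x, f (x, p) ∂μ) * g p) ν) :
    Integrable (fun v => f v * g v.2) (μ.prod ν) :=
  (integrable_mul_comp_fst hf.swap (fun _ => hpos _) hg hfg).swap

lemma integral_mul_comp_snd (f : α × β → ℝ) (g : β → ℝ)
    (hfg : Integrable (fun v => f v * g v.2) (μ.prod ν)) :
    ∫ v, f v * g v.2 ∂μ.prod ν = ∫ p, (∫ x, f (x, p) ∂μ) * g p ∂ν := by
  rw [← integral_prod_swap]
  exact integral_mul_comp_fst (fun w => f w.swap) g hfg.swap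

lemma integral_mul_log_marginals_sub_le {f : α × β → ℝ} (hf : Integrable f (μ.prod ν))
    (hpos : 0 ≤ f) (hfl : Integrable (fun v => f v * log (f v)) (μ.prod ν))
    (hAl : Integrable (fun x => (∫ p, f (x, p) ∂ν) * log (∫ p, f (x, p) ∂ν)) μ)
    (hBl : Integrable (fun p => (∫ x, f (x, p) ∂μ) * log (∫ x, f (x, p) ∂μ)) ν) :
    ∫ x, (∫ p, f (x, p) ∂ν) * log (∫ p, f (x, p) ∂ν) ∂μ
      + ∫ p, (∫ x, f (x, p) ∂μ) * log (∫ x, f (x, p) ∂μ) ∂ν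
      - (∫ v, f v ∂μ.prod ν) * log (∫ v, f v ∂μ.prod ν) ≤ ∫ v, f v * log (f v) ∂μ.prod ν := by
  set A : α → ℝ := fun x => ∫ p, f (x, p) ∂ν
  set B : β → ℝ := fun p => ∫ x, f (x, p) ∂μ
  set V := ∫ v, f v ∂μ.prod ν
  have hfA : Integrable (fun v => f v * log (A v.1)) (μ.prod ν) :=
    integrable_mul_comp_fst hf hpos hf.integral_prod_left.1.aemeasurable.log.aestronglyMeasurable
      hAl
  have hfB : Integrable (fun v => f v * log (B v.2)) (μ.prod ν) :=
    integrable_mul_comp_snd hf hpos hf.integral_prod_right.1.aemeasurable.log.aestronglyMeasurable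
      hBl
  have hAB : Integrable (fun v => A v.1 * B v.2 / V) (μ.prod ν) :=
    (hf.integral_prod_left.mul_prod hf.integral_prod_right).div_const V
  have hR : Integrable (fun v => f v * (log V - 1) + A v.1 * B v.2 / V) (μ.prod ν) :=
    (hf.mul_const _).add hAB
  have gibbs : ∀ᵐ v ∂μ.prod ν, f v * log (A v.1) + f v * log (B v.2)
      ≤ f v * log (f v) + (f v * (log V - 1) + A v.1 * B v.2 / V) := by
    filter_upwards [ae_pos_integrals_of_pos hf hpos] with v hv
    have hABV : 0 ≤ A v.1 * B v.2 / V := div_nonneg (mul_nonneg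
      (integral_nonneg fun p => hpos _) (integral_nonneg fun x => hpos _)) (integral_nonneg hpos)
    linarith [mul_log_add_mul_log_le_mul_log_add_div (hpos v) hABV hv]
  -- `V * V / V = V` also holds when `V = 0`
  have hR_int : ∫ v, f v * (log V - 1) + A v.1 * B v.2 / V ∂μ.prod ν = V * log V := by
    rw [integral_add (hf.mul_const _) hAB, integral_mul_const, integral_div, integral_prod_mul A B,
      ← integral_prod f hf, ← integral_prod_symm f hf, mul_self_div_self]
    ring
  have hmono : ∫ v, f v * log (A v.1) + f v * log (B v.2) ∂μ.prod ν
      ≤ ∫ v, f v * log (f v) + (f v * (log V - 1) + A v.1 * B v.2 / V) ∂μ.prod ν :=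
    integral_mono_ae (hfA.add hfB) (hfl.add hR) gibbs
  rw [integral_add hfA hfB, integral_add hfl hR, hR_int,
    integral_mul_comp_fst f (fun x => log (A x)) hfA,
    integral_mul_comp_snd f (fun p => log (B p)) hfB] at hmono
  linarith

lemma integrable_mul_log_integral_max_zero_and_le {W : α × β → ℝ} (hW : Integrable W (μ.prod ν))
    {ρ ρm : α → ℝ} (hρ : ∀ x, ρ x = ∫ p, W (x, p) ∂ν)
    (hρm : ∀ x, ρm x = ∫ p, max (-W (x, p)) 0 ∂ν) (hρ0 : ∀ x, 0 ≤ ρ x)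
    (hρl : Integrable (fun x => ρ x * log (ρ x)) μ)
    (hρml : Integrable (fun x => ρm x * log (ρm x)) μ) :
    Integrable (fun x => (∫ p, max (W (x, p)) 0 ∂ν) * log (∫ p, max (W (x, p)) 0 ∂ν)) μ ∧
      ∫ x, ρ x * log (ρ x) ∂μ + ∫ x, ρm x * log (ρm x) ∂μ ≤
        ∫ x, (∫ p, max (W (x, p)) 0 ∂ν) * log (∫ p, max (W (x, p)) 0 ∂ν) ∂μ := by
  have hρ_int : Integrable ρ μ := hW.integral_prod_left.congr (ae_of_all _ fun x => (hρ x).symm)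
  have hρm_int : Integrable ρm μ :=
    hW.neg.pos_part.integral_prod_left.congr (ae_of_all _ fun x => (hρm x).symm)
  have hρm0 : ∀ x, 0 ≤ ρm x := fun x => (hρm x).symm ▸ integral_nonneg fun _ => le_max_right _ _
  have hsplit : (fun x => (∫ p, max (W (x, p)) 0 ∂ν) * log (∫ p, max (W (x, p)) 0 ∂ν)) =ᵐ[μ]
      fun x => (ρ x + ρm x) * log (ρ x + ρm x) := by
    filter_upwards [ae_integral_max_zero_eq_add hW] with x hx
    rw [hx, hρ, hρm]
  rw [integral_congr_ae hsplit]
  exact ⟨(integrable_add_mul_log_add hρ0 hρm0 hρ_int hρm_int hρl hρml).congr hsplit.symm,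
    integral_mul_log_add_integral_mul_log_le hρ0 hρm0 hρ_int hρm_int hρl hρml⟩

end Integrals

theorem marginal_entropies_lower_bound_general
    (W : ℝ × ℝ → ℝ) (hW : Integrable W)
    (ρx ρp ρmx ρmp : ℝ → ℝ)
    (hρx : ∀ x, ρx x = ∫ p, W (x, p))
    (hρp : ∀ p, ρp p = ∫ x, W (x, p))
    (hρmx : ∀ x, ρmx x = ∫ p, max (-W (x, p)) 0)
    (hρmp : ∀ p, ρmp p = ∫ x, max (-W (x, p)) 0)
    (hρxpos : ∀ x, 0 ≤ ρx x) (hρppos : ∀ p, 0 ≤ ρp p)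
    (h1 : Integrable fun x => ρx x * Real.log (ρx x))
    (h2 : Integrable fun p => ρp p * Real.log (ρp p))
    (h3 : Integrable fun x => ρmx x * Real.log (ρmx x))
    (h4 : Integrable fun p => ρmp p * Real.log (ρmp p))
    (h5 : IntegrableOn (fun v => W v * Real.log (W v)) {v | 0 ≤ W v}) :
    (-∫ v in {v | 0 ≤ W v}, W v * Real.log (W v)) -
        (∫ v, max (W v) 0) * Real.log (∫ v, max (W v) 0) -
        (-∫ x, ρmx x * Real.log (ρmx x)) -
        (-∫ p, ρmp p * Real.log (ρmp p)) ≤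
      (-∫ x, ρx x * Real.log (ρx x)) + (-∫ p, ρp p * Real.log (ρp p)) := by
  rw [Measure.volume_eq_prod] at hW h5 ⊢
  obtain ⟨hAl, hA⟩ := integrable_mul_log_integral_max_zero_and_le hW hρx hρmx hρxpos h1 h3
  obtain ⟨hBl, hB⟩ := integrable_mul_log_integral_max_zero_and_le hW.swap hρp hρmp hρppos h2 h4
  simp only [Function.comp_apply, Prod.swap_prod_mk] at hB
  have hsub := integral_mul_log_marginals_sub_le hW.pos_part (fun _ => le_max_right _ _)
    (integrable_max_zero_mul_log hW.1 h5) hAl hBl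
  rw [setIntegral_nonneg_mul_log_eq hW.1]
  linarith

/-- Lower bound on the sum of the marginal entropies of a Wigner function in
terms of the positive Wigner entropy, the positive volume, and the entropies
of the marginals of the negative part:
`h(ρ_x) + h(ρ_p) ≥ h₊(W) - Vol₊(W) ln Vol₊(W) - h(ρ⁻_x) - h(ρ⁻_p)`. -/
theorem marginal_entropies_lower_bound
    (W : ℝ × ℝ → ℝ) (hW : Integrable W) (hnorm : ∫ v, W v = 1)
    (ρx ρp ρmx ρmp : ℝ → ℝ)
    (hρx : ∀ x, ρx x = ∫ p, W (x, p))
    (hρp : ∀ p, ρp p = ∫ x, W (x, p))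
    (hρmx : ∀ x, ρmx x = ∫ p, max (-W (x, p)) 0)
    (hρmp : ∀ p, ρmp p = ∫ x, max (-W (x, p)) 0)
    (hρxpos : ∀ x, 0 ≤ ρx x) (hρppos : ∀ p, 0 ≤ ρp p)
    (h1 : Integrable fun x => ρx x * Real.log (ρx x))
    (h2 : Integrable fun p => ρp p * Real.log (ρp p))
    (h3 : Integrable fun x => ρmx x * Real.log (ρmx x))
    (h4 : Integrable fun p => ρmp p * Real.log (ρmp p))
    (h5 : IntegrableOn (fun v => W v * Real.log (W v)) {v | 0 ≤ W v}) :
    (-∫ v in {v | 0 ≤ W v}, W v * Real.log (W v)) -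
        (∫ v, max (W v) 0) * Real.log (∫ v, max (W v) 0) -
        (-∫ x, ρmx x * Real.log (ρmx x)) -
        (-∫ p, ρmp p * Real.log (ρmp p)) ≤
      (-∫ x, ρx x * Real.log (ρx x)) + (-∫ p, ρp p * Real.log (ρp p)) :=
  marginal_entropies_lower_bound_general W hW ρx ρp ρmx ρmp hρx hρp hρmx hρmp hρxpos hρppos h1 h2 h3
    h4 h5
end
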